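/- arXiv:0811.2616 — 2 statements merged into one kernel-verified Lean document; each statement's English description precedes it below -/
import Mathlib

section
/- Smooth Feshbach–Schur isospectrality (forward direction): Let H₀, W, χ, χ̄ be bounded operators on a Hilbert space H with χ, χ̄ self-adjoint, 0 ≤ χ, χ̄ ≤ 1, χ² + χ̄² = 1, and H₀ commuting with both χ and χ̄. Set H := H₀ + W and assume H_{χ̄} := H₀ + χ̄ W χ̄ is invertible with bounded inverse. Define F := H₀ + χ W χ − χ W χ̄ H_{χ̄}⁻¹ χ̄ W χ. If ψ ∈ H satisfies H ψ = 0 and ψ ≠ 0, then φ := χ ψ satisfies F φ = 0 and φ ≠ 0. -/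
/-- Smooth Feshbach–Schur isospectrality, forward direction. -/
theorem stmt_3 {𝓗 : Type*} [NormedAddCommGroup 𝓗] [InnerProductSpace ℂ 𝓗] [CompleteSpace 𝓗]
    (H₀ W χ χb R : 𝓗 →L[ℂ] 𝓗)
    (hχsa : IsSelfAdjoint χ) (hχbsa : IsSelfAdjoint χb)
    (hχpos : χ.IsPositive) (hχle : (1 - χ).IsPositive)
    (hχbpos : χb.IsPositive) (hχble : (1 - χb).IsPositive)
    (hpart : χ ^ 2 + χb ^ 2 = 1)
    (hcomm : H₀ * χ = χ * H₀) (hcommb : H₀ * χb = χb * H₀)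
    (hR1 : R * (H₀ + χb * W * χb) = 1) (hR2 : (H₀ + χb * W * χb) * R = 1)
    (ψ : 𝓗) (hψ : (H₀ + W) ψ = 0) (hψne : ψ ≠ 0) :
    (H₀ + χ * W * χ - χ * W * χb * R * χb * W * χ) (χ ψ) = 0 ∧ χ ψ ≠ 0 := by
  set a := χ ψ with ha
  set b := χb ψ with hb
  have hsum : χ a + χb b = ψ := by
    have := congrArg (fun T : 𝓗 →L[ℂ] 𝓗 => T ψ) hpart
    simpa [pow_two, ContinuousLinearMap.add_apply, ContinuousLinearMap.mul_apply] using this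
  have hHψ : H₀ ψ + W ψ = 0 := by simpa using hψ
  have hWψ : W ψ = W (χ a) + W (χb b) := by rw [← map_add, hsum]
  -- apply χb
  have hcb : H₀ b + (χb (W (χ a)) + χb (W (χb b))) = 0 := by
    have h1 : χb (H₀ ψ) = H₀ b := by
      have := congrArg (fun T : 𝓗 →L[ℂ] 𝓗 => T ψ) hcommb
      simpa [ContinuousLinearMap.mul_apply] using this.symm
    have := congrArg (fun x => χb x) hHψ
    simp only [map_add, map_zero, h1, hWψ] at this
    linear_combination (norm := abel) this
  have hbeq : b = - R (χb (W (χ a))) := by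
    have h2 : (H₀ + χb * W * χb) b = - χb (W (χ a)) := by
      simp only [ContinuousLinearMap.add_apply, ContinuousLinearMap.mul_apply]
      linear_combination (norm := abel) hcb
    have h3 := congrArg (fun x => R x) h2
    have h4 : R ((H₀ + χb * W * χb) b) = b := by
      have := congrArg (fun T : 𝓗 →L[ℂ] 𝓗 => T b) hR1
      simpa [ContinuousLinearMap.mul_apply] using this
    simp only [h4, map_neg] at h3
    exact h3
  -- apply χ
  have hc : H₀ a + (χ (W (χ a)) + χ (W (χb b))) = 0 := by
    have h1 : χ (H₀ ψ) = H₀ a := by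
      have := congrArg (fun T : 𝓗 →L[ℂ] 𝓗 => T ψ) hcomm
      simpa [ContinuousLinearMap.mul_apply] using this.symm
    have := congrArg (fun x => χ x) hHψ
    simp only [map_add, map_zero, h1, hWψ] at this
    linear_combination (norm := abel) this
  constructor
  · simp only [ContinuousLinearMap.sub_apply, ContinuousLinearMap.add_apply,
      ContinuousLinearMap.mul_apply]
    rw [hbeq] at hc
    simp only [map_neg] at hc
    linear_combination (norm := abel) hc
  · intro h0
    apply hψne
    rw [← hsum]
    have hb0 : b = 0 := by rw [hbeq, h0]; simp
    rw [h0, hb0]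
    simp
end

section
/- In the smooth Feshbach–Schur setting with H = H₀ + W, H_{χ̄} = H₀ + χ̄Wχ̄ boundedly invertible, F := H₀ + χWχ − χWχ̄H_{χ̄}⁻¹χ̄Wχ, Q := χ − χ̄H_{χ̄}⁻¹χ̄Wχ, and Q# := χ − χWχ̄H_{χ̄}⁻¹χ̄: if both H and F are boundedly invertible, then H⁻¹ = Q F⁻¹ Q# + χ̄ H_{χ̄}⁻¹ χ̄. -/
/-- Resolvent identity for the smooth Feshbach–Schur map:
`H⁻¹ = Q F⁻¹ Q# + χ̄ H_{χ̄}⁻¹ χ̄`. -/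
theorem stmt_5 {𝓗 : Type*} [NormedAddCommGroup 𝓗] [InnerProductSpace ℂ 𝓗] [CompleteSpace 𝓗]
    (H₀ W χ χb R Hinv Finv : 𝓗 →L[ℂ] 𝓗)
    (hχsa : IsSelfAdjoint χ) (hχbsa : IsSelfAdjoint χb)
    (hχpos : χ.IsPositive) (hχle : (1 - χ).IsPositive)
    (hχbpos : χb.IsPositive) (hχble : (1 - χb).IsPositive)
    (hpart : χ ^ 2 + χb ^ 2 = 1)
    (hcomm : H₀ * χ = χ * H₀) (hcommb : H₀ * χb = χb * H₀)
    (hR1 : R * (H₀ + χb * W * χb) = 1) (hR2 : (H₀ + χb * W * χb) * R = 1)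
    (hH1 : Hinv * (H₀ + W) = 1) (hH2 : (H₀ + W) * Hinv = 1)
    (hF1 : Finv * (H₀ + χ * W * χ - χ * W * χb * R * χb * W * χ) = 1)
    (hF2 : (H₀ + χ * W * χ - χ * W * χb * R * χb * W * χ) * Finv = 1) :
    Hinv = (χ - χb * R * χb * W * χ) * Finv * (χ - χ * W * χb * R * χb) + χb * R * χb := by
  set X := (χ - χb * R * χb * W * χ) * Finv * (χ - χ * W * χb * R * χb) + χb * R * χb with hXdef
  -- W * χ splits via the partition of unity
  have hWr : W * χ = χ ^ 2 * W * χ + χb ^ 2 * W * χ := by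
    have : (χ ^ 2 + χb ^ 2) * W * χ = W * χ := by rw [hpart, one_mul]
    rw [← this]; noncomm_ring
  -- key identity: H * χb = χb * H_{χb} + χ² W χb
  have h1 : (H₀ + W) * χb = χb * (H₀ + χb * W * χb) + χ ^ 2 * W * χb := by
    have e : (H₀ + W) * χb = H₀ * χb + (χ ^ 2 + χb ^ 2) * W * χb := by
      rw [hpart, one_mul]; noncomm_ring
    rw [e, hcommb]; noncomm_ring
  -- H * Q = χ * F
  have hHQ : (H₀ + W) * (χ - χb * R * χb * W * χ)
      = χ * (H₀ + χ * W * χ - χ * W * χb * R * χb * W * χ) := by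
    have e : (H₀ + W) * (χ - χb * R * χb * W * χ)
        = H₀ * χ + W * χ - ((H₀ + W) * χb) * (R * (χb * W * χ)) := by noncomm_ring
    rw [e, h1, hcomm, hWr]
    have e2 : (χb * (H₀ + χb * W * χb) + χ ^ 2 * W * χb) * (R * (χb * W * χ))
        = χb * (((H₀ + χb * W * χb) * R) * (χb * W * χ))
          + χ ^ 2 * W * χb * R * χb * W * χ := by noncomm_ring
    rw [e2, hR2, one_mul]
    noncomm_ring
  -- H * (χb R χb) = χb² + χ² W χb R χb
  have hHR : (H₀ + W) * (χb * R * χb) = χb ^ 2 + χ ^ 2 * W * χb * R * χb := by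
    have e : (H₀ + W) * (χb * R * χb) = ((H₀ + W) * χb) * (R * χb) := by noncomm_ring
    rw [e, h1]
    have e2 : (χb * (H₀ + χb * W * χb) + χ ^ 2 * W * χb) * (R * χb)
        = χb * (((H₀ + χb * W * χb) * R) * χb) + χ ^ 2 * W * χb * R * χb := by noncomm_ring
    rw [e2, hR2, one_mul]
    noncomm_ring
  -- H * X = 1
  have hX : (H₀ + W) * X = 1 := by
    have e : (H₀ + W) * X
        = ((H₀ + W) * (χ - χb * R * χb * W * χ)) * (Finv * (χ - χ * W * χb * R * χb))
          + (H₀ + W) * (χb * R * χb) := by rw [hXdef]; noncomm_ring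
    rw [e, hHQ, hHR]
    have e2 : χ * (H₀ + χ * W * χ - χ * W * χb * R * χb * W * χ)
          * (Finv * (χ - χ * W * χb * R * χb))
        = χ * (((H₀ + χ * W * χ - χ * W * χb * R * χb * W * χ) * Finv)
          * (χ - χ * W * χb * R * χb)) := by noncomm_ring
    rw [e2, hF2, one_mul]
    have e3 : χ * (χ - χ * W * χb * R * χb) + (χb ^ 2 + χ ^ 2 * W * χb * R * χb)
        = χ ^ 2 + χb ^ 2 := by noncomm_ring
    rw [e3, hpart]
  calc Hinv = Hinv * ((H₀ + W) * X) := by rw [hX, mul_one]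
    _ = (Hinv * (H₀ + W)) * X := by rw [mul_assoc]
    _ = X := by rw [hH1, one_mul]
end
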